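/- Let M be a type carrying the discrete topology and Γ a set of finite subsets of M. Let k : ℕ and a : Fin k → M be a family of points whose image {a i | i : Fin k} has at least two elements. Then the flag strict hypercoherence of the family of constant functions (fun w => a i) holds if and only if {a i | i : Fin k} ∈ Γ. (X is a retract of flag X via the constant-function embedding, in hypercoherences.) -/
import Mathlib


/-- Lexicographic (strict) order on the Cantor space `ℕ → Bool`. -/
def lexLt (w w' : ℕ → Bool) : Prop :=
  ∃ n : ℕ, (∀ k < n, w k = w' k) ∧ w n = false ∧ w' n = true

/-- Flag strict hypercoherence of a finite family of functions on the Cantor space. -/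
def flagHyp {M : Type*} [DecidableEq M] (Γ : Set (Finset M)) {k : ℕ}
    (f : Fin k → (ℕ → Bool) → M) : Prop :=
  ∃ w, (Finset.univ.image (fun i => f i w) ∈ Γ ∧
          1 < (Finset.univ.image (fun i => f i w)).card) ∧
    ∀ v, lexLt v w → ∃ a, Finset.univ.image (fun i => f i v) = {a}

/-- `X` is a retract of `flag X` via the constant-function embedding, in
hypercoherences. -/
theorem flag_hypercoherence_retract {M : Type*} [TopologicalSpace M]
    [DiscreteTopology M] [DecidableEq M]
    (Γ : Set (Finset M)) (k : ℕ) (a : Fin k → M)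
    (hnt : 1 < (Finset.univ.image a).card) :
    flagHyp Γ (fun i => fun _ => a i) ↔ Finset.univ.image a ∈ Γ := by
  constructor
  · rintro ⟨w, ⟨hΓ, _⟩, _⟩
    simpa using hΓ
  · intro hΓ
    refine ⟨fun _ => false, ⟨by simpa using hΓ, by simpa using hnt⟩, ?_⟩
    rintro v ⟨n, -, -, hn⟩
    simp at hn
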